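/- arXiv:2305.08608 — 3 statements merged into one kernel-verified Lean document; each statement's English description precedes it below -/
import Mathlib

section
/- For every integer i, the partition of the infinite dihedral group D∞ whose parts are the sets {z^j s, z^{i−j} s} for j ∈ ℤ and the sets {z^j, z^{−j}} for j ∈ ℤ is the partition into basic sets of a Schur ring over D∞. -/
/-!
The proposed basic sets are exactly the orbits `{g, σ g}` of the involutive automorphism `σ` of
`D∞` given by `z^j ↦ z^(-j)` and `z^j s ↦ z^(i-j) s`. For any involutive automorphism `σ` of a
group `G`, the orbit sums span a Schur ring: `σ` extends to a ring automorphism of `F[G]` fixing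
every orbit sum, so a product of two orbit sums is `σ`-invariant, i.e. its coefficient function is
constant on orbits, which makes it a linear combination of orbit sums.
-/

open scoped BigOperators

/-- A Schur ring over the group `G` with coefficients in the field `F`, presented by its
partition into finite nonempty basic sets. -/
structure SchurRing (F : Type) [Field F] [CharZero F] (G : Type) [Group G] [DecidableEq G] where
  /-- the basic sets -/
  parts : Set (Finset G)
  nonempty : ∀ C ∈ parts, C.Nonempty
  cover : ∀ g : G, ∃ C ∈ parts, g ∈ C
  eq_or_disjoint : ∀ C ∈ parts, ∀ D ∈ parts, C = D ∨ Disjoint C D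
  one_mem : ({1} : Finset G) ∈ parts
  inv_mem : ∀ C ∈ parts, C.image (·⁻¹) ∈ parts
  mul_mem : ∀ C ∈ parts, ∀ D ∈ parts, ∃ S : Finset (Finset G),
    (↑S : Set (Finset G)) ⊆ parts ∧ ∃ coef : Finset G → F,
      (∑ g ∈ C, MonoidAlgebra.single g (1 : F)) * (∑ g ∈ D, MonoidAlgebra.single g (1 : F))
        = ∑ E ∈ S, coef E • ∑ g ∈ E, MonoidAlgebra.single g (1 : F)

/-- A subset of `G` is an `A`-set if it is a union of basic sets of `A`. -/
def SchurRing.IsASet {F : Type} [Field F] [CharZero F] {G : Type} [Group G] [DecidableEq G]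
    (A : SchurRing F G) (X : Set G) : Prop :=
  ∃ 𝒮 : Set (Finset G), 𝒮 ⊆ A.parts ∧ X = ⋃ C ∈ 𝒮, (C : Set G)

/-- The infinite dihedral group, realized as `DihedralGroup 0`. -/
abbrev Dinf : Type := DihedralGroup 0

/-- The generator `z` of infinite order. -/
def zz : Dinf := DihedralGroup.r 1

/-- The reflection `s` of order two. -/
def ss : Dinf := DihedralGroup.sr 0

namespace DihedralGroup

variable {n : ℕ}

def reflectHom (c : ZMod n) : DihedralGroup n →* DihedralGroup n where
  toFun
    | r j => r (-j)
    | sr a => sr (c - a)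
  map_one' := congrArg r neg_zero
  map_mul' := by
    rintro (a | a) (b | b) <;> simp only [r_mul_r, r_mul_sr, sr_mul_r, sr_mul_sr] <;>
      congr 1 <;> ring

@[simp] lemma reflectHom_r (c j : ZMod n) : reflectHom c (r j) = r (-j) := rfl
@[simp] lemma reflectHom_sr (c a : ZMod n) : reflectHom c (sr a) = sr (c - a) := rfl

lemma reflectHom_involutive (c : ZMod n) : Function.Involutive (reflectHom c) := by
  rintro (j | a) <;> simp

end DihedralGroup

open DihedralGroup

lemma zz_zpow (j : ℤ) : zz ^ j = r (Int.cast j : ZMod 0) := r_one_zpow j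

section PairOrbit

open MonoidAlgebra

variable {F G : Type} [Group G] {σ : G →* G}

lemma coeff_map_eq_of_mapDomainRingHom_eq [Semiring F] (hσ : Function.Injective σ)
    {f : MonoidAlgebra F G} (hf : mapDomainRingHom F σ f = f) (x : G) :
    f.coeff (σ x) = f.coeff x := by
  conv_lhs => rw [← hf]
  exact Finsupp.mapDomain_apply hσ f.coeff x

variable [DecidableEq G]

def pairOrbit (σ : G →* G) (g : G) : Finset G := {g, σ g}

lemma mem_pairOrbit_self (g : G) : g ∈ pairOrbit σ g := Finset.mem_insert_self _ _

lemma pairOrbit_eq_iff (hσ : Function.Involutive σ) {x g : G} :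
    pairOrbit σ x = pairOrbit σ g ↔ x ∈ pairOrbit σ g := by
  refine ⟨fun h ↦ h ▸ mem_pairOrbit_self x, fun hx ↦ ?_⟩
  rcases Finset.mem_insert.1 hx with rfl | hx
  · rfl
  · rw [Finset.mem_singleton.1 hx, pairOrbit, pairOrbit, hσ, Finset.pair_comm]

lemma pairOrbit_eq_or_disjoint (hσ : Function.Involutive σ) (c d : G) :
    pairOrbit σ c = pairOrbit σ d ∨ Disjoint (pairOrbit σ c) (pairOrbit σ d) := by
  refine or_iff_not_imp_right.2 fun h ↦ ?_
  obtain ⟨x, hxc, hxd⟩ := Finset.not_disjoint_iff.1 h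
  rw [← (pairOrbit_eq_iff hσ).2 hxc, (pairOrbit_eq_iff hσ).2 hxd]

lemma image_inv_pairOrbit (g : G) : (pairOrbit σ g).image (·⁻¹) = pairOrbit σ g⁻¹ := by
  simp [pairOrbit, Finset.image_insert]

lemma image_pairOrbit (hσ : Function.Involutive σ) (g : G) :
    (pairOrbit σ g).image σ = pairOrbit σ g := by
  rw [pairOrbit, Finset.image_insert, Finset.image_singleton, hσ, Finset.pair_comm]

variable (F) [Semiring F]

noncomputable def simpleQuantity (C : Finset G) : MonoidAlgebra F G := ∑ g ∈ C, single g 1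

lemma mapDomainRingHom_simpleQuantity (hσ : Function.Injective σ) (C : Finset G) :
    mapDomainRingHom F σ (simpleQuantity F C) = simpleQuantity F (C.image σ) := by
  simp [simpleQuantity, Finset.sum_image fun _ _ _ _ h ↦ hσ h]

lemma mapDomainRingHom_simpleQuantity_pairOrbit (hσ : Function.Involutive σ) (g : G) :
    mapDomainRingHom F σ (simpleQuantity F (pairOrbit σ g)) =
      simpleQuantity F (pairOrbit σ g) := by
  rw [mapDomainRingHom_simpleQuantity F hσ.injective, image_pairOrbit hσ]

variable {F}

lemma coeff_eq_of_mem_pairOrbit {f : MonoidAlgebra F G} (hf : ∀ x, f.coeff (σ x) = f.coeff x)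
    {x g : G} (hx : x ∈ pairOrbit σ g) : f.coeff x = f.coeff g := by
  rcases Finset.mem_insert.1 hx with rfl | hx
  · rfl
  · rw [Finset.mem_singleton.1 hx, hf]

lemma exists_eq_sum_smul_simpleQuantity_pairOrbit (hσ : Function.Involutive σ)
    (f : MonoidAlgebra F G) (hf : ∀ x, f.coeff (σ x) = f.coeff x) :
    ∃ S : Finset (Finset G), (↑S : Set (Finset G)) ⊆ Set.range (pairOrbit σ) ∧
      ∃ coef : Finset G → F, f = ∑ E ∈ S, coef E • simpleQuantity F E := by
  classical
  let coef (E : Finset G) : F := if h : E.Nonempty then f.coeff h.choose else 0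
  have coef_pairOrbit (g : G) : coef (pairOrbit σ g) = f.coeff g := by
    have hne : (pairOrbit σ g).Nonempty := ⟨g, mem_pairOrbit_self g⟩
    simp only [coef, dif_pos hne]
    exact coeff_eq_of_mem_pairOrbit hf hne.choose_spec
  refine ⟨f.coeff.support.image (pairOrbit σ), by simp [Set.range], coef, ?_⟩
  refine (Finset.sum_image' (fun x ↦ single x (f.coeff x)) fun g hg ↦ ?_).trans
    (sum_coeff_single f) |>.symm
  have fiber : {x ∈ f.coeff.support | pairOrbit σ x = pairOrbit σ g} = pairOrbit σ g := by
    ext x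
    rw [Finset.mem_filter, pairOrbit_eq_iff hσ, and_iff_right_iff_imp, Finsupp.mem_support_iff]
    intro hx
    rwa [coeff_eq_of_mem_pairOrbit hf hx, ← Finsupp.mem_support_iff]
  rw [fiber, simpleQuantity, Finset.smul_sum, coef_pairOrbit]
  refine Finset.sum_congr rfl fun x hx ↦ ?_
  rw [smul_single', mul_one, coeff_eq_of_mem_pairOrbit hf hx]

end PairOrbit

namespace SchurRing

variable (F : Type) [Field F] [CharZero F] {G : Type} [Group G] [DecidableEq G]

noncomputable def ofInvolution (σ : G →* G) (hσ : Function.Involutive σ) : SchurRing F G where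
  parts := Set.range (pairOrbit σ)
  nonempty := by
    rintro _ ⟨g, rfl⟩
    exact ⟨g, mem_pairOrbit_self g⟩
  cover g := ⟨_, ⟨g, rfl⟩, mem_pairOrbit_self g⟩
  eq_or_disjoint := by
    rintro _ ⟨c, rfl⟩ _ ⟨d, rfl⟩
    exact pairOrbit_eq_or_disjoint hσ c d
  one_mem := ⟨1, by simp [pairOrbit]⟩
  inv_mem := by
    rintro _ ⟨g, rfl⟩
    exact ⟨g⁻¹, (image_inv_pairOrbit g).symm⟩
  mul_mem := by
    rintro _ ⟨c, rfl⟩ _ ⟨d, rfl⟩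
    refine exists_eq_sum_smul_simpleQuantity_pairOrbit hσ _
      (coeff_map_eq_of_mapDomainRingHom_eq hσ.injective ?_)
    rw [map_mul]
    exact congrArg₂ (· * ·) (mapDomainRingHom_simpleQuantity_pairOrbit F hσ c)
      (mapDomainRingHom_simpleQuantity_pairOrbit F hσ d)

lemma parts_ofInvolution (σ : G →* G) (hσ : Function.Involutive σ) :
    (ofInvolution F σ hσ).parts = Set.range (pairOrbit σ) := rfl

end SchurRing

/-- For every integer `i`, the partition of `D∞` into the sets `{z^j s, z^(i-j) s}` and
`{z^j, z^(-j)}` is the partition into basic sets of a Schur ring over `D∞`. -/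
theorem stmt_4 (F : Type) [Field F] [CharZero F] (i : ℤ) :
    ∃ A : SchurRing F Dinf, A.parts =
      {C : Finset Dinf | ∃ j : ℤ, C = {zz ^ j * ss, zz ^ (i - j) * ss}} ∪
      {C : Finset Dinf | ∃ j : ℤ, C = {zz ^ j, zz ^ (-j)}} := by
  refine ⟨.ofInvolution F (reflectHom (Int.cast (-i))) (reflectHom_involutive _), ?_⟩
  ext C
  simp only [SchurRing.parts_ofInvolution, Set.mem_range, Set.mem_union, Set.mem_ofPred_eq,
    zz_zpow, ss, r_mul_sr, zero_sub]
  constructor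
  · rintro ⟨a | a, rfl⟩ <;> obtain ⟨a, rfl⟩ := ZMod.intCast_surjective a
    · exact Or.inr ⟨a, by rw [pairOrbit, reflectHom_r, Int.cast_neg]⟩
    · refine Or.inl ⟨-a, ?_⟩
      rw [pairOrbit, reflectHom_sr]
      simp only [Int.cast_neg, Int.cast_sub]
      ring_nf
  · rintro (⟨j, rfl⟩ | ⟨j, rfl⟩)
    · refine ⟨sr (Int.cast (-j)), ?_⟩
      rw [pairOrbit, reflectHom_sr]
      simp only [Int.cast_neg, Int.cast_sub]
      ring_nf
    · exact ⟨r (Int.cast j), by rw [pairOrbit, reflectHom_r, Int.cast_neg]⟩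
end

section
/- Let A be a Schur ring over the infinite dihedral group D∞ such that Z = ⟨z⟩ is an A-subgroup and every basic set of A contained in Z is a singleton. Then every basic set of A is a singleton, i.e. A is the full group algebra F[D∞]. -/
open scoped BigOperators

/-! A basic set outside `⟨z⟩` consists of reflections. If it contained two reflections
`sr i ≠ sr j`, the rotation `a = r (i - j)` carrying one to the other would form a basic
singleton, and the product of simple quantities `{a}̄ · C̄` would force `aC = C`. But a finite
nonempty set cannot be stable under left multiplication by an element of infinite order. -/

open DihedralGroup

namespace SchurRing

noncomputable def simpleQuantity (F : Type) [Semiring F] {G : Type} (C : Finset G) :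
    MonoidAlgebra F G :=
  ∑ g ∈ C, MonoidAlgebra.single g (1 : F)

theorem coeff_simpleQuantity {F : Type} [Semiring F] {G : Type} [DecidableEq G] (C : Finset G)
    (u : G) : (simpleQuantity F C).coeff u = if u ∈ C then 1 else 0 := by
  simp only [simpleQuantity, MonoidAlgebra.coeff_sum, Finsupp.finsetSum_apply,
    MonoidAlgebra.coeff_single, Finsupp.single_apply, Finset.sum_ite_eq']

variable {F : Type} [Field F] [CharZero F] {G : Type} [Group G] [DecidableEq G] (A : SchurRing F G)

theorem exists_mul_simpleQuantity_eq {C D : Finset G} (hC : C ∈ A.parts) (hD : D ∈ A.parts) :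
    ∃ S : Finset (Finset G), (↑S : Set (Finset G)) ⊆ A.parts ∧ ∃ coef : Finset G → F,
      simpleQuantity F C * simpleQuantity F D = ∑ E ∈ S, coef E • simpleQuantity F E :=
  A.mul_mem C hC D hD

theorem coeff_sum_smul_simpleQuantity {S : Finset (Finset G)}
    (hS : (↑S : Set (Finset G)) ⊆ A.parts) (coef : Finset G → F) {C : Finset G}
    (hC : C ∈ A.parts) {u : G} (hu : u ∈ C) :
    (∑ E ∈ S, coef E • simpleQuantity F E).coeff u = if C ∈ S then coef C else 0 := by
  have hterm : ∀ E ∈ S,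
      (coef E • simpleQuantity F E).coeff u = if E = C then coef E else 0 := by
    intro E hE
    rw [MonoidAlgebra.coeff_smul_apply, coeff_simpleQuantity, smul_eq_mul]
    rcases A.eq_or_disjoint E (hS hE) C hC with rfl | hdisj
    · simp [hu]
    · have huE : u ∉ E := fun huE => Finset.disjoint_left.1 hdisj huE hu
      have hEC : E ≠ C := by rintro rfl; exact huE hu
      simp [huE, hEC]
  rw [MonoidAlgebra.coeff_sum, Finsupp.finsetSum_apply, Finset.sum_congr rfl hterm,
    Finset.sum_ite_eq']

theorem subset_of_mem_of_isASet {X : Set G} (hX : A.IsASet X) {C : Finset G} (hC : C ∈ A.parts)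
    {g : G} (hgC : g ∈ C) (hgX : g ∈ X) : (C : Set G) ⊆ X := by
  obtain ⟨𝒮, h𝒮, rfl⟩ := hX
  obtain ⟨D, hD𝒮, hgD⟩ := Set.mem_iUnion₂.1 hgX
  rcases A.eq_or_disjoint C hC D (h𝒮 hD𝒮) with rfl | hdisj
  · exact Set.subset_biUnion_of_mem (u := fun C : Finset G => (C : Set G)) hD𝒮
  · exact (Finset.disjoint_left.1 hdisj hgC hgD).elim

/-- `{a}̄ · C̄` is the simple quantity of `aC` and lies in `A`, so its coefficients are constant
on `C`; together with `|aC| = |C|` this forces `aC = C`. -/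
theorem image_mul_left_eq_self {a : G} (ha : {a} ∈ A.parts) {C : Finset G} (hC : C ∈ A.parts)
    {x : G} (hx : x ∈ C) (hax : a * x ∈ C) : C.image (a * ·) = C := by
  obtain ⟨S, hS, coef, heq⟩ := A.exists_mul_simpleQuantity_eq ha hC
  have hprod : simpleQuantity F {a} * simpleQuantity F C = simpleQuantity F (C.image (a * ·)) := by
    simp only [simpleQuantity, Finset.sum_singleton, Finset.mul_sum,
      MonoidAlgebra.single_mul_single, one_mul,
      Finset.sum_image (fun u _ v _ h => mul_left_cancel h)]
  have hcoeff : ∀ u ∈ C, (if u ∈ C.image (a * ·) then (1 : F) else 0) =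
      if C ∈ S then coef C else 0 := fun u hu => by
    rw [← coeff_simpleQuantity, ← hprod, heq, A.coeff_sum_smul_simpleQuantity hS coef hC hu]
  have hsub : C ⊆ C.image (a * ·) := fun u hu => by
    have h := (hcoeff u hu).trans (hcoeff _ hax).symm
    rw [if_pos (Finset.mem_image_of_mem _ hx)] at h
    by_contra hu'
    exact zero_ne_one (if_neg hu' ▸ h)
  exact (Finset.eq_of_subset_of_card_le hsub Finset.card_image_le).symm

end SchurRing

theorem isOfFinOrder_of_forall_mul_mem {G : Type} [Group G] {C : Finset G} {a x : G} (hx : x ∈ C)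
    (hC : ∀ t ∈ C, a * t ∈ C) : IsOfFinOrder a := by
  by_contra ha
  have hmem : ∀ n : ℕ, a ^ n * x ∈ C := fun n => by
    induction n with
    | zero => simpa using hx
    | succ n ih => simpa [pow_succ', mul_assoc] using hC _ ih
  have hinj : Function.Injective fun n : ℕ => a ^ n * x := fun m n h =>
    injective_pow_iff_not_isOfFinOrder.2 ha (mul_right_cancel h)
  exact Set.infinite_of_injective_forall_mem hinj hmem C.finite_toSet

theorem r_mem_zpowers_zz (i : ZMod 0) : (r i : Dinf) ∈ Subgroup.zpowers zz :=
  ⟨i, r_one_zpow i⟩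

theorem not_isOfFinOrder_r {i : ZMod 0} (hi : i ≠ 0) : ¬ IsOfFinOrder (r i : Dinf) := by
  rw [isOfFinOrder_iff_pow_eq_one]
  rintro ⟨n, hn, hpow⟩
  rw [r_pow, one_def, r.injEq] at hpow
  exact hi ((mul_eq_zero.1 hpow).resolve_right (by exact_mod_cast hn.ne'))

/-- If `⟨z⟩` is an `A`-subgroup and every basic set contained in `⟨z⟩` is a singleton, then
every basic set of `A` is a singleton, i.e. `A` is the full group algebra. -/
theorem stmt_6 (F : Type) [Field F] [CharZero F] (A : SchurRing F Dinf)
    (hZ : A.IsASet (Subgroup.zpowers zz : Subgroup Dinf))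
    (hdisc : ∀ C ∈ A.parts, (C : Set Dinf) ⊆ (Subgroup.zpowers zz : Subgroup Dinf) →
      ∃ g : Dinf, C = {g}) :
    ∀ C ∈ A.parts, ∃ g : Dinf, C = {g} := by
  have hsingleton : ∀ i, ({r i} : Finset Dinf) ∈ A.parts := fun i => by
    obtain ⟨D, hD, hiD⟩ := A.cover (r i)
    obtain ⟨g, rfl⟩ := hdisc D hD (A.subset_of_mem_of_isASet hZ hD hiD (r_mem_zpowers_zz i))
    rwa [Finset.mem_singleton.1 hiD]
  have hreflection : ∀ C ∈ A.parts, ¬ (C : Set Dinf) ⊆ Subgroup.zpowers zz →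
      ∀ g ∈ C, ∃ i, g = sr i := by
    rintro C hC hCZ (i | i) hg
    · exact (hCZ (A.subset_of_mem_of_isASet hZ hC hg (r_mem_zpowers_zz i))).elim
    · exact ⟨i, rfl⟩
  intro C hC
  by_cases hCZ : (C : Set Dinf) ⊆ Subgroup.zpowers zz
  · exact hdisc C hC hCZ
  obtain ⟨x, hx⟩ := A.nonempty C hC
  refine ⟨x, Finset.eq_singleton_iff_unique_mem.2 ⟨hx, fun y hy => ?_⟩⟩
  obtain ⟨i, rfl⟩ := hreflection C hC hCZ x hx
  obtain ⟨j, rfl⟩ := hreflection C hC hCZ y hy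
  have hshift : r (i - j) * sr i = sr j := by rw [r_mul_sr, sub_sub_cancel]
  have hstable := A.image_mul_left_eq_self (hsingleton (i - j)) hC hx (hshift ▸ hy)
  have hfin := isOfFinOrder_of_forall_mul_mem hx fun t ht =>
    hstable ▸ Finset.mem_image_of_mem _ ht
  rw [sub_eq_zero.1 (of_not_not fun hij => not_isOfFinOrder_r hij hfin)]
end

section
/- Let A be a Schur ring over the infinite dihedral group D∞ such that Z = ⟨z⟩ is an A-subgroup, every basic set of A contained in Z is of the form {z^j, z^{−j}}, and the basic set of A containing s is {s, z^i s} for some i ≠ 0. Then there exists a nonzero integer i₀ such that {z^{i₀} s} is a basic set of A if and only if i is even; moreover, in that case i₀ = i/2, the set {z^{i/2} s} is the unique singleton basic set other than {1}, and the basic sets of A are exactly the sets {z^{j+i/2} s, z^{i/2−j} s} for j ∈ ℤ together with the sets {z^j, z^{−j}} for j ∈ ℤ. -/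
open scoped BigOperators

/-!
For basic sets `C` and `X`, the coefficient of `C̄ X̄` at `g` counts the factorizations
`g = c x`, so it is nonzero exactly on the product set `C X`; since it is constant on basic sets,
`C X` is a union of basic sets. With `D = {s, z^i s}` and `T_j = {z^j, z^(-j)}`, the sets
`T_a D` and `T_(a-i) D` both contain `z^a s`, and comparing them shows that a reflection `z^b s`
in the basic set of `z^a s` has `b = a` or `b = i - a`. Similarly `s ∈ T_a {z^a s}`, so a
singleton `{z^a s}` can only be basic if `z^i s ∈ T_a {z^a s}`, i.e. `2a = i`. Hence the basic
set through `z^a s` is `{z^a s, z^(i-a) s}`, and it is a singleton exactly when `2a = i`.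
-/

open scoped Pointwise

namespace SchurRing

variable {F : Type} [Field F] [CharZero F] {G : Type} [Group G] [DecidableEq G]

theorem eq_of_mem_of_mem (A : SchurRing F G) {C D : Finset G} {g : G}
    (hC : C ∈ A.parts) (hD : D ∈ A.parts) (hgC : g ∈ C) (hgD : g ∈ D) : C = D :=
  (A.eq_or_disjoint C hC D hD).resolve_right (Finset.not_disjoint_iff.mpr ⟨g, hgC, hgD⟩)

theorem subset_of_isASet (A : SchurRing F G) {X : Set G} (hX : A.IsASet X) {C : Finset G}
    (hC : C ∈ A.parts) {g : G} (hgC : g ∈ C) (hgX : g ∈ X) : (C : Set G) ⊆ X := by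
  obtain ⟨𝒮, h𝒮, rfl⟩ := hX
  obtain ⟨D, hD𝒮, hgD⟩ := Set.mem_iUnion₂.mp hgX
  rw [A.eq_of_mem_of_mem hC (h𝒮 hD𝒮) hgC hgD]
  exact Set.subset_biUnion_of_mem hD𝒮

theorem coeff_mul_ne_zero_iff (C X : Finset G) (x : G) :
    ((∑ g ∈ C, MonoidAlgebra.single g (1 : F)) *
      (∑ g ∈ X, MonoidAlgebra.single g (1 : F))).coeff x ≠ 0 ↔ x ∈ C * X := by
  rw [Finset.sum_mul_sum, ← Finset.sum_product']
  simp only [MonoidAlgebra.single_mul_single, mul_one, MonoidAlgebra.coeff_sum,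
    Finsupp.finsetSum_apply, MonoidAlgebra.coeff_single, Finsupp.single_apply]
  rw [Finset.sum_boole, Nat.cast_ne_zero, Finset.card_ne_zero, Finset.mem_mul]
  simp [Finset.filter_nonempty_iff, and_assoc]

theorem coeff_mul_eq_of_mem (A : SchurRing F G) {C X E : Finset G}
    (hC : C ∈ A.parts) (hX : X ∈ A.parts) (hE : E ∈ A.parts) {a b : G}
    (ha : a ∈ E) (hb : b ∈ E) :
    ((∑ g ∈ C, MonoidAlgebra.single g (1 : F)) *
      (∑ g ∈ X, MonoidAlgebra.single g (1 : F))).coeff a =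
    ((∑ g ∈ C, MonoidAlgebra.single g (1 : F)) *
      (∑ g ∈ X, MonoidAlgebra.single g (1 : F))).coeff b := by
  obtain ⟨S, hS, coef, heq⟩ := A.mul_mem C hC X hX
  have hab : ∀ E' ∈ S, (a ∈ E' ↔ b ∈ E') := fun E' hE' =>
    ⟨fun h => A.eq_of_mem_of_mem (hS hE') hE h ha ▸ hb,
     fun h => A.eq_of_mem_of_mem (hS hE') hE h hb ▸ ha⟩
  simp only [heq, MonoidAlgebra.coeff_sum, Finsupp.finsetSum_apply, MonoidAlgebra.coeff_smul,
    Finsupp.smul_apply, MonoidAlgebra.coeff_single, Finsupp.single_apply, Finset.sum_ite_eq']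
  exact Finset.sum_congr rfl fun E' hE' => by rw [if_congr (hab E' hE') rfl rfl]

theorem mem_mul_of_mem (A : SchurRing F G) {C X E : Finset G}
    (hC : C ∈ A.parts) (hX : X ∈ A.parts) (hE : E ∈ A.parts) {a b : G}
    (ha : a ∈ E) (hb : b ∈ E) (haCX : a ∈ C * X) : b ∈ C * X := by
  rw [← coeff_mul_ne_zero_iff (F := F)] at haCX ⊢
  rwa [← A.coeff_mul_eq_of_mem hC hX hE ha hb]

end SchurRing

theorem zz_zpow_s8 (k : ℤ) : zz ^ k = DihedralGroup.r k := by
  rw [zz, DihedralGroup.r_one_zpow]; rfl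

theorem zz_zpow_mul_ss (k : ℤ) : zz ^ k * ss = DihedralGroup.sr (-k) := by
  rw [zz, DihedralGroup.r_one_zpow, ss, DihedralGroup.r_mul_sr, zero_sub]; rfl

theorem zz_zpow_injective : Function.Injective (zz ^ · : ℤ → Dinf) := fun a b h =>
  DihedralGroup.r.inj ((zz_zpow_s8 a).symm.trans (h.trans (zz_zpow_s8 b)))

theorem zz_zpow_mul_ss_injective : Function.Injective (zz ^ · * ss : ℤ → Dinf) := fun a b h =>
  neg_inj.mp (DihedralGroup.sr.inj ((zz_zpow_mul_ss a).symm.trans (h.trans (zz_zpow_mul_ss b))))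

theorem zz_zpow_ne_zz_zpow_mul_ss (j k : ℤ) : zz ^ j ≠ zz ^ k * ss := by
  rw [zz_zpow_mul_ss, zz_zpow_s8]; simp

theorem exists_eq_zz_zpow_or_zz_zpow_mul_ss (g : Dinf) :
    (∃ k : ℤ, g = zz ^ k) ∨ ∃ k : ℤ, g = zz ^ k * ss := by
  cases g with
  | r k => exact Or.inl ⟨k, (zz_zpow_s8 k).symm⟩
  | sr k => exact Or.inr ⟨-k, ((zz_zpow_mul_ss (-k)).trans (congrArg _ (neg_neg k))).symm⟩

theorem zz_zpow_mul_ss_mem_pair {x c d : ℤ} :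
    zz ^ x * ss ∈ ({zz ^ c * ss, zz ^ d * ss} : Finset Dinf) ↔ x = c ∨ x = d := by
  simp [zz_zpow_mul_ss_injective.eq_iff]

theorem zz_zpow_mul_ss_mem_pair_mul_pair {x j c d : ℤ} :
    zz ^ x * ss ∈ ({zz ^ j, zz ^ (-j)} : Finset Dinf) * {zz ^ c * ss, zz ^ d * ss} ↔
      x = j + c ∨ x = j + d ∨ x = -j + c ∨ x = -j + d := by
  simp only [Finset.mem_mul, Finset.mem_insert, Finset.mem_singleton, exists_eq_or_imp,
    exists_eq_left, ← mul_assoc, ← zpow_add, zz_zpow_mul_ss_injective.eq_iff]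
  omega

namespace SchurRing

variable {F : Type} [Field F] [CharZero F]

theorem zpow_pair_mem_parts (A : SchurRing F Dinf)
    (hZ : A.IsASet (Subgroup.zpowers zz : Subgroup Dinf))
    (hsym : ∀ C ∈ A.parts, (C : Set Dinf) ⊆ (Subgroup.zpowers zz : Subgroup Dinf) →
      ∃ j : ℤ, C = {zz ^ j, zz ^ (-j)}) (j : ℤ) :
    ({zz ^ j, zz ^ (-j)} : Finset Dinf) ∈ A.parts := by
  obtain ⟨C, hC, hjC⟩ := A.cover (zz ^ j)
  obtain ⟨k, rfl⟩ :=
    hsym C hC (A.subset_of_isASet hZ hC hjC (Subgroup.zpow_mem_zpowers zz j))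
  simp only [Finset.mem_insert, Finset.mem_singleton, zz_zpow_injective.eq_iff] at hjC
  rcases hjC with rfl | rfl
  · exact hC
  · rwa [neg_neg, Finset.pair_comm]

theorem eq_zero_of_singleton_zz_zpow_mem_parts (A : SchurRing F Dinf)
    (hT : ∀ j : ℤ, ({zz ^ j, zz ^ (-j)} : Finset Dinf) ∈ A.parts) {k : ℤ}
    (hk : ({zz ^ k} : Finset Dinf) ∈ A.parts) : k = 0 := by
  have hTk := A.eq_of_mem_of_mem hk (hT k) (Finset.mem_singleton_self _)
    (Finset.mem_insert_self _ _)
  have : zz ^ (-k) ∈ ({zz ^ k} : Finset Dinf) := by simp [hTk]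
  have := zz_zpow_injective (Finset.mem_singleton.mp this)
  omega

theorem two_mul_eq_of_singleton_mem_parts (A : SchurRing F Dinf)
    (hT : ∀ j : ℤ, ({zz ^ j, zz ^ (-j)} : Finset Dinf) ∈ A.parts) {i : ℤ} (hi : i ≠ 0)
    (hD : ({ss, zz ^ i * ss} : Finset Dinf) ∈ A.parts) {a : ℤ}
    (ha : ({zz ^ a * ss} : Finset Dinf) ∈ A.parts) : 2 * a = i := by
  rw [← Finset.pair_eq_singleton] at ha
  have hD' : ({zz ^ (0 : ℤ) * ss, zz ^ i * ss} : Finset Dinf) ∈ A.parts := by simpa using hD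
  have := A.mem_mul_of_mem (hT a) ha hD' (Finset.mem_insert_self _ _)
    (Finset.mem_insert_of_mem (Finset.mem_singleton_self _))
    (zz_zpow_mul_ss_mem_pair_mul_pair.mpr (by omega))
  rw [zz_zpow_mul_ss_mem_pair_mul_pair] at this
  omega

theorem eq_sub_of_mem_of_mem (A : SchurRing F Dinf)
    (hT : ∀ j : ℤ, ({zz ^ j, zz ^ (-j)} : Finset Dinf) ∈ A.parts) {i : ℤ}
    (hD : ({ss, zz ^ i * ss} : Finset Dinf) ∈ A.parts) {S : Finset Dinf} (hS : S ∈ A.parts)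
    {a b : ℤ} (ha : zz ^ a * ss ∈ S) (hb : zz ^ b * ss ∈ S) (hab : a ≠ b) : b = i - a := by
  have hD' : ({zz ^ (0 : ℤ) * ss, zz ^ i * ss} : Finset Dinf) ∈ A.parts := by simpa using hD
  have transfer : ∀ {x y : ℤ}, zz ^ x * ss ∈ S → zz ^ y * ss ∈ S → ∀ j : ℤ,
      (x = j + 0 ∨ x = j + i ∨ x = -j + 0 ∨ x = -j + i) →
        y = j + 0 ∨ y = j + i ∨ y = -j + 0 ∨ y = -j + i := fun hx hy j hxj => by
    simpa only [zz_zpow_mul_ss_mem_pair_mul_pair] using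
      A.mem_mul_of_mem (hT j) hD' hS hx hy (zz_zpow_mul_ss_mem_pair_mul_pair.mpr hxj)
  have := transfer ha hb a
  have := transfer ha hb (a - i)
  have := transfer hb ha b
  have := transfer hb ha (b - i)
  omega

theorem eq_pair_of_mem (A : SchurRing F Dinf)
    (hT : ∀ j : ℤ, ({zz ^ j, zz ^ (-j)} : Finset Dinf) ∈ A.parts) {i : ℤ} (hi : i ≠ 0)
    (hD : ({ss, zz ^ i * ss} : Finset Dinf) ∈ A.parts) {S : Finset Dinf} (hS : S ∈ A.parts)
    {a : ℤ} (ha : zz ^ a * ss ∈ S) : S = {zz ^ a * ss, zz ^ (i - a) * ss} := by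
  have hsub : S ⊆ {zz ^ a * ss, zz ^ (i - a) * ss} := by
    intro g hg
    rcases exists_eq_zz_zpow_or_zz_zpow_mul_ss g with ⟨k, rfl⟩ | ⟨b, rfl⟩
    · have hSk := A.eq_of_mem_of_mem hS (hT k) hg (Finset.mem_insert_self _ _)
      rw [hSk, Finset.mem_insert, Finset.mem_singleton] at ha
      exact (ha.elim (zz_zpow_ne_zz_zpow_mul_ss k a).symm
        (zz_zpow_ne_zz_zpow_mul_ss (-k) a).symm).elim
    · rw [zz_zpow_mul_ss_mem_pair]
      rcases eq_or_ne a b with rfl | hab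
      · exact Or.inl rfl
      · exact Or.inr (A.eq_sub_of_mem_of_mem hT hD hS ha hg hab)
  by_cases hmem : zz ^ (i - a) * ss ∈ S
  · exact hsub.antisymm (Finset.insert_subset ha (Finset.singleton_subset_iff.mpr hmem))
  · have hS' : S = {zz ^ a * ss} := by
      refine Finset.eq_singleton_iff_unique_mem.mpr ⟨ha, fun g hg => ?_⟩
      rcases Finset.mem_insert.mp (hsub hg) with rfl | hg'
      · rfl
      · exact absurd (Finset.mem_singleton.mp hg' ▸ hg) hmem
    have := A.two_mul_eq_of_singleton_mem_parts hT hi hD (hS' ▸ hS)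
    rw [show i - a = a by omega] at hmem
    exact absurd ha hmem

theorem singleton_mem_parts_of_two_mul_eq (A : SchurRing F Dinf)
    (hT : ∀ j : ℤ, ({zz ^ j, zz ^ (-j)} : Finset Dinf) ∈ A.parts) {i : ℤ} (hi : i ≠ 0)
    (hD : ({ss, zz ^ i * ss} : Finset Dinf) ∈ A.parts) {a : ℤ} (ha : 2 * a = i) :
    ({zz ^ a * ss} : Finset Dinf) ∈ A.parts := by
  obtain ⟨S, hS, haS⟩ := A.cover (zz ^ a * ss)
  rwa [A.eq_pair_of_mem hT hi hD hS haS, show i - a = a by omega, Finset.pair_eq_singleton] at hS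

theorem parts_eq (A : SchurRing F Dinf)
    (hZ : A.IsASet (Subgroup.zpowers zz : Subgroup Dinf))
    (hsym : ∀ C ∈ A.parts, (C : Set Dinf) ⊆ (Subgroup.zpowers zz : Subgroup Dinf) →
      ∃ j : ℤ, C = {zz ^ j, zz ^ (-j)})
    {i : ℤ} (hi : i ≠ 0) (hD : ({ss, zz ^ i * ss} : Finset Dinf) ∈ A.parts) :
    A.parts = {C : Finset Dinf | ∃ a : ℤ, C = {zz ^ a * ss, zz ^ (i - a) * ss}} ∪
      {C : Finset Dinf | ∃ j : ℤ, C = {zz ^ j, zz ^ (-j)}} := by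
  have hT := A.zpow_pair_mem_parts hZ hsym
  ext C
  constructor
  · intro hC
    obtain ⟨g, hg⟩ := A.nonempty C hC
    rcases exists_eq_zz_zpow_or_zz_zpow_mul_ss g with ⟨k, rfl⟩ | ⟨a, rfl⟩
    · exact Or.inr (hsym C hC (A.subset_of_isASet hZ hC hg (Subgroup.zpow_mem_zpowers zz k)))
    · exact Or.inl ⟨a, A.eq_pair_of_mem hT hi hD hC hg⟩
  · rintro (⟨a, rfl⟩ | ⟨j, rfl⟩)
    · obtain ⟨S, hS, haS⟩ := A.cover (zz ^ a * ss)
      exact A.eq_pair_of_mem hT hi hD hS haS ▸ hS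
    · exact hT j

end SchurRing

/-- Suppose `⟨z⟩` is an `A`-subgroup, every basic set inside `⟨z⟩` has the form `{z^j, z^(-j)}`,
and the basic set containing `s` is `{s, z^i s}` with `i ≠ 0`. Then a singleton basic set
`{z^(i₀) s}` with `i₀ ≠ 0` exists iff `i` is even; in that case `i₀ = i/2`, the set
`{z^(i/2) s}` is the unique singleton basic set besides `{1}`, and the basic sets are exactly
the `{z^(j+i/2) s, z^(i/2-j) s}` together with the `{z^j, z^(-j)}`. -/
theorem stmt_8 (F : Type) [Field F] [CharZero F] (A : SchurRing F Dinf)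
    (hZ : A.IsASet (Subgroup.zpowers zz : Subgroup Dinf))
    (hsym : ∀ C ∈ A.parts, (C : Set Dinf) ⊆ (Subgroup.zpowers zz : Subgroup Dinf) →
      ∃ j : ℤ, C = {zz ^ j, zz ^ (-j)})
    (i : ℤ) (hi : i ≠ 0) (hD : ({ss, zz ^ i * ss} : Finset Dinf) ∈ A.parts) :
    ((∃ i₀ : ℤ, i₀ ≠ 0 ∧ ({zz ^ i₀ * ss} : Finset Dinf) ∈ A.parts) ↔ Even i) ∧
    (Even i →
      (∀ i₀ : ℤ, i₀ ≠ 0 → ({zz ^ i₀ * ss} : Finset Dinf) ∈ A.parts → i₀ = i / 2) ∧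
      ({zz ^ (i / 2) * ss} : Finset Dinf) ∈ A.parts ∧
      (∀ g : Dinf, ({g} : Finset Dinf) ∈ A.parts → g = 1 ∨ g = zz ^ (i / 2) * ss) ∧
      A.parts =
        {C : Finset Dinf | ∃ j : ℤ, C = {zz ^ (j + i / 2) * ss, zz ^ (i / 2 - j) * ss}} ∪
        {C : Finset Dinf | ∃ j : ℤ, C = {zz ^ j, zz ^ (-j)}}) := by
  have hT := A.zpow_pair_mem_parts hZ hsym
  have hsing := fun a => A.two_mul_eq_of_singleton_mem_parts hT hi hD (a := a)
  have hhalf : Even i → ({zz ^ (i / 2) * ss} : Finset Dinf) ∈ A.parts := fun ⟨c, hc⟩ =>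
    A.singleton_mem_parts_of_two_mul_eq hT hi hD (by omega)
  refine ⟨⟨fun ⟨a, _, ha⟩ => ⟨a, by linarith [hsing a ha]⟩,
    fun hE => ⟨i / 2, by obtain ⟨c, hc⟩ := hE; omega, hhalf hE⟩⟩, fun hE => ?_⟩
  obtain ⟨c, rfl⟩ := hE
  refine ⟨fun a _ ha => by have := hsing a ha; omega, hhalf ⟨c, rfl⟩, fun g hg => ?_, ?_⟩
  · rcases exists_eq_zz_zpow_or_zz_zpow_mul_ss g with ⟨k, rfl⟩ | ⟨a, rfl⟩
    · rw [A.eq_zero_of_singleton_zz_zpow_mem_parts hT hg, zpow_zero]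
      exact Or.inl rfl
    · rw [show a = (c + c) / 2 by have := hsing a hg; omega]
      exact Or.inr rfl
  · rw [A.parts_eq hZ hsym hi hD, show (c + c) / 2 = c by omega]
    congr 1
    ext C
    refine ⟨fun ⟨a, hC⟩ => ⟨a - c, ?_⟩, fun ⟨j, hC⟩ => ⟨j + c, ?_⟩⟩ <;> rw [hC] <;> ring_nf
end
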